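/- arXiv:1903.06451 — 2 statements merged into one kernel-verified Lean document; each statement's English description precedes it below -/
import Mathlib

section
/- Let R be a commutative ring, let Gᵢ = aᵢx² + bᵢx + cᵢ for i = 1,2,3 be polynomials in R[x], and set δ := det of the 3×3 matrix with rows (aᵢ, bᵢ, cᵢ). Define H₁ := G₂′G₃ − G₂G₃′, H₂ := G₃′G₁ − G₃G₁′, H₃ := G₁′G₂ − G₁G₂′, and write Hᵢ = αᵢx² + βᵢx + γᵢ. Then det of the 3×3 matrix with rows (αᵢ, βᵢ, γᵢ) equals 2δ². -/
open Polynomial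

lemma Ctwo {R : Type*} [CommRing R] : (C (2:R)) = 2 := by
  rw [show (2:R) = 1 + 1 by norm_num, C_add, C_1]; norm_num

lemma quad_deriv {R : Type*} [CommRing R] (a b c : R) :
    derivative (C a * X ^ 2 + C b * X + C c) = C (2*a) * X + C b := by
  simp only [derivative_add, derivative_C_mul, derivative_X_pow, derivative_X, derivative_C,
    Nat.cast_ofNat, C_mul, Ctwo]
  ring

lemma H_form {R : Type*} [CommRing R] (a b c a' b' c' : R) :
    derivative (C a * X ^ 2 + C b * X + C c) * (C a' * X ^ 2 + C b' * X + C c') -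
      (C a * X ^ 2 + C b * X + C c) * derivative (C a' * X ^ 2 + C b' * X + C c') =
    C (a*b' - a'*b) * X ^ 2 + C (2*(a*c' - a'*c)) * X + C (b*c' - b'*c) := by
  rw [quad_deriv, quad_deriv]
  simp only [C_sub, C_mul, C_add, Ctwo]
  ring

lemma coeffs {R : Type*} [CommRing R] (p q r : R) :
    (C p * X ^ 2 + C q * X + C r).coeff 2 = p ∧
    (C p * X ^ 2 + C q * X + C r).coeff 1 = q ∧
    (C p * X ^ 2 + C q * X + C r).coeff 0 = r := by
  refine ⟨?_, ?_, ?_⟩ <;> simp [coeff_add, coeff_C_mul, coeff_X_pow, coeff_C]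

theorem richelot_dual_determinant (R : Type*) [CommRing R]
    (a₁ b₁ c₁ a₂ b₂ c₂ a₃ b₃ c₃ : R) (G₁ G₂ G₃ : R[X])
    (hG₁ : G₁ = C a₁ * X ^ 2 + C b₁ * X + C c₁)
    (hG₂ : G₂ = C a₂ * X ^ 2 + C b₂ * X + C c₂)
    (hG₃ : G₃ = C a₃ * X ^ 2 + C b₃ * X + C c₃)
    (δ : R) (hδ : δ = Matrix.det !![a₁, b₁, c₁; a₂, b₂, c₂; a₃, b₃, c₃])
    (H₁ H₂ H₃ : R[X])
    (hH₁ : H₁ = derivative G₂ * G₃ - G₂ * derivative G₃)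
    (hH₂ : H₂ = derivative G₃ * G₁ - G₃ * derivative G₁)
    (hH₃ : H₃ = derivative G₁ * G₂ - G₁ * derivative G₂) :
    Matrix.det !![H₁.coeff 2, H₁.coeff 1, H₁.coeff 0;
                  H₂.coeff 2, H₂.coeff 1, H₂.coeff 0;
                  H₃.coeff 2, H₃.coeff 1, H₃.coeff 0] = 2 * δ ^ 2 := by
  subst hG₁ hG₂ hG₃
  rw [H_form] at hH₁ hH₂ hH₃
  subst hH₁ hH₂ hH₃
  obtain ⟨e1, e2, e3⟩ := coeffs (a₂*b₃ - a₃*b₂) (2*(a₂*c₃ - a₃*c₂)) (b₂*c₃ - b₃*c₂) (R := R)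
  obtain ⟨f1, f2, f3⟩ := coeffs (a₃*b₁ - a₁*b₃) (2*(a₃*c₁ - a₁*c₃)) (b₃*c₁ - b₁*c₃) (R := R)
  obtain ⟨g1, g2, g3⟩ := coeffs (a₁*b₂ - a₂*b₁) (2*(a₁*c₂ - a₂*c₁)) (b₁*c₂ - b₂*c₁) (R := R)
  rw [e1, e2, e3, f1, f2, f3, g1, g2, g3, Matrix.det_fin_three, hδ, Matrix.det_fin_three]
  simp [Matrix.cons_val_zero, Matrix.cons_val_one]
  ring
end

section
/- Let K be a field and let Gᵢ = aᵢx² + bᵢx + cᵢ for i = 1,2,3 be quadratics in K[x] with δ := det of the matrix with rows (aᵢ, bᵢ, cᵢ) equal to 0, and suppose the characteristic of K is not 2. Define H₁ := G₂′G₃ − G₂G₃′, H₂ := G₃′G₁ − G₃G₁′, H₃ := G₁′G₂ − G₁G₂′. Then the polynomials H₁, H₂, H₃ are pairwise linearly dependent over K (each pair spans a K-subspace of dimension at most 1). -/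
open Polynomial

lemma span_pair_finrank_le' {K M : Type*} [Field K] [AddCommGroup M] [Module K M]
    {u v : M} (h : u ∈ Submodule.span K ({v} : Set M)) :
    Module.finrank K (Submodule.span K ({u, v} : Set M)) ≤ 1 := by
  have hle : Submodule.span K ({u, v} : Set M) ≤ Submodule.span K ({v} : Set M) := by
    rw [Submodule.span_le, Set.insert_subset_iff, Set.singleton_subset_iff]
    exact ⟨h, Submodule.mem_span_singleton_self v⟩
  rcases eq_or_ne v 0 with rfl | hv
  · have : Submodule.span K ({(0 : M)} : Set M) = ⊥ := by simp
    rw [this] at hle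
    have hbot : Submodule.span K ({u, (0:M)} : Set M) = ⊥ := le_bot_iff.mp hle
    rw [hbot]
    simp
  · calc Module.finrank K (Submodule.span K ({u, v} : Set M))
        ≤ Module.finrank K (Submodule.span K ({v} : Set M)) := Submodule.finrank_mono hle
      _ = 1 := finrank_span_singleton hv

theorem richelot_singular_proportional (K : Type*) [Field K] (hchar : ringChar K ≠ 2)
    (a₁ b₁ c₁ a₂ b₂ c₂ a₃ b₃ c₃ : K) (G₁ G₂ G₃ : K[X])
    (hG₁ : G₁ = C a₁ * X ^ 2 + C b₁ * X + C c₁)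
    (hG₂ : G₂ = C a₂ * X ^ 2 + C b₂ * X + C c₂)
    (hG₃ : G₃ = C a₃ * X ^ 2 + C b₃ * X + C c₃)
    (hδ : Matrix.det !![a₁, b₁, c₁; a₂, b₂, c₂; a₃, b₃, c₃] = 0)
    (H₁ H₂ H₃ : K[X])
    (hH₁ : H₁ = derivative G₂ * G₃ - G₂ * derivative G₃)
    (hH₂ : H₂ = derivative G₃ * G₁ - G₃ * derivative G₁)
    (hH₃ : H₃ = derivative G₁ * G₂ - G₁ * derivative G₂) :
    Module.finrank K (Submodule.span K {H₁, H₂}) ≤ 1 ∧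
    Module.finrank K (Submodule.span K {H₁, H₃}) ≤ 1 ∧
    Module.finrank K (Submodule.span K {H₂, H₃}) ≤ 1 := by
  obtain ⟨v, hv0, hvM⟩ := Matrix.exists_vecMul_eq_zero_iff.mpr hδ
  set l₁ := v 0 with hl1
  set l₂ := v 1 with hl2
  set l₃ := v 2 with hl3
  have ha : l₁ * a₁ + l₂ * a₂ + l₃ * a₃ = 0 := by
    have := congrFun hvM 0
    simpa [Matrix.vecMul, dotProduct, Fin.sum_univ_three] using this
  have hb : l₁ * b₁ + l₂ * b₂ + l₃ * b₃ = 0 := by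
    have := congrFun hvM 1
    simpa [Matrix.vecMul, dotProduct, Fin.sum_univ_three] using this
  have hc : l₁ * c₁ + l₂ * c₂ + l₃ * c₃ = 0 := by
    have := congrFun hvM 2
    simpa [Matrix.vecMul, dotProduct, Fin.sum_univ_three] using this
  have hne : l₁ ≠ 0 ∨ l₂ ≠ 0 ∨ l₃ ≠ 0 := by
    by_contra h
    push_neg at h
    obtain ⟨h1, h2, h3⟩ := h
    apply hv0
    funext i
    fin_cases i <;> simpa [hl1, hl2, hl3] using (by assumption : _)
  -- the linear relation
  have hCa : (C l₁ * C a₁ + C l₂ * C a₂ + C l₃ * C a₃ : K[X]) = 0 := by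
    rw [← C_mul, ← C_mul, ← C_mul, ← C_add, ← C_add, ha, C_0]
  have hCb : (C l₁ * C b₁ + C l₂ * C b₂ + C l₃ * C b₃ : K[X]) = 0 := by
    rw [← C_mul, ← C_mul, ← C_mul, ← C_add, ← C_add, hb, C_0]
  have hCc : (C l₁ * C c₁ + C l₂ * C c₂ + C l₃ * C c₃ : K[X]) = 0 := by
    rw [← C_mul, ← C_mul, ← C_mul, ← C_add, ← C_add, hc, C_0]
  have hS : C l₁ * G₁ + C l₂ * G₂ + C l₃ * G₃ = 0 := by
    rw [hG₁, hG₂, hG₃]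
    linear_combination (X : K[X]) ^ 2 * hCa + (X : K[X]) * hCb + hCc
  have hS' : C l₁ * derivative G₁ + C l₂ * derivative G₂ + C l₃ * derivative G₃ = 0 := by
    have := congrArg derivative hS
    simpa [derivative_add, derivative_C_mul] using this
  have rel12 : l₁ • H₂ = l₂ • H₁ := by
    rw [smul_eq_C_mul, smul_eq_C_mul, hH₁, hH₂]
    linear_combination (derivative G₃) * hS - G₃ * hS'
  have rel31 : l₃ • H₁ = l₁ • H₃ := by
    rw [smul_eq_C_mul, smul_eq_C_mul, hH₁, hH₃]
    linear_combination (derivative G₂) * hS - G₂ * hS'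
  have rel23 : l₂ • H₃ = l₃ • H₂ := by
    rw [smul_eq_C_mul, smul_eq_C_mul, hH₂, hH₃]
    linear_combination (derivative G₁) * hS - G₁ * hS'
  have mem_of_smul : ∀ {p q : K[X]} {α β : K}, α ≠ 0 → α • p = β • q →
      p ∈ Submodule.span K ({q} : Set K[X]) := by
    intro p q α β hα h
    rw [Submodule.mem_span_singleton]
    exact ⟨α⁻¹ * β, by rw [mul_smul, ← h, ← mul_smul, inv_mul_cancel₀ hα, one_smul]⟩
  have smul_zero_mem : ∀ {p q : K[X]} {α : K}, α ≠ 0 → α • p = 0 →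
      p ∈ Submodule.span K ({q} : Set K[X]) := by
    intro p q α hα h
    have : p = 0 := by
      rcases smul_eq_zero.mp h with h' | h'
      · exact absurd h' hα
      · exact h'
    rw [this]
    exact Submodule.zero_mem _
  refine ⟨?_, ?_, ?_⟩
  · -- {H₁, H₂}
    rcases hne with h1 | h2 | h3
    · rw [Set.pair_comm]
      exact span_pair_finrank_le' (mem_of_smul h1 rel12)
    · exact span_pair_finrank_le' (mem_of_smul h2 rel12.symm)
    · rcases eq_or_ne l₁ 0 with h1 | h1
      · refine span_pair_finrank_le' (smul_zero_mem h3 ?_)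
        rw [rel31, h1, zero_smul]
      · rw [Set.pair_comm]
        exact span_pair_finrank_le' (mem_of_smul h1 rel12)
  · -- {H₁, H₃}
    rcases hne with h1 | h2 | h3
    · rw [Set.pair_comm]
      exact span_pair_finrank_le' (mem_of_smul h1 rel31.symm)
    · rcases eq_or_ne l₃ 0 with h3 | h3
      · rw [Set.pair_comm]
        refine span_pair_finrank_le' (smul_zero_mem h2 ?_)
        rw [rel23, h3, zero_smul]
      · exact span_pair_finrank_le' (mem_of_smul h3 rel31)
    · exact span_pair_finrank_le' (mem_of_smul h3 rel31)
  · -- {H₂, H₃}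
    rcases hne with h1 | h2 | h3
    · rcases eq_or_ne l₂ 0 with h2 | h2
      · refine span_pair_finrank_le' (smul_zero_mem h1 ?_)
        rw [rel12, h2, zero_smul]
      · rw [Set.pair_comm]
        exact span_pair_finrank_le' (mem_of_smul h2 rel23)
    · rw [Set.pair_comm]
      exact span_pair_finrank_le' (mem_of_smul h2 rel23)
    · exact span_pair_finrank_le' (mem_of_smul h3 rel23.symm)
end
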